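/- arXiv:1010.5596 — 4 statements merged into one kernel-verified Lean document; each statement's English description precedes it below -/
import Mathlib

section
/- Let 𝔲 be a real Lie algebra with a decomposition 𝔲 = 𝔨 ⊕ 𝔟 as a direct sum of vector subspaces where 𝔨 and 𝔟 are Lie subalgebras. Let L̃ be the Lie algebra of Laurent polynomial loops Σ_{j ≤ n₀} ξⱼλʲ with coefficients in 𝔲, let σ be an involutive automorphism of 𝔲 extended to loops by (σ̂ξ)(λ) = σ(ξ(λ⁻¹)), let L̃₊ be the fixed set of σ̂ in L̃, and let L̃₋ = {Σ_{j≤0} ξⱼλʲ : ξ₀ ∈ 𝔟}. Then L̃ = L̃₊ ⊕ L̃₋ as vector spaces, and explicitly, for A(λ) = Σ_{j ≤ n₀} Aⱼλʲ, π₊(A) = (A₀)_𝔨 + Σ_{j>0}(Aⱼλʲ + σ(Aⱼ)λ⁻ʲ) and π₋(A) = (A₀)_𝔟 + Σ_{j>0}(A₋ⱼ − σ(Aⱼ))λ⁻ʲ, where (A₀)_𝔨, (A₀)_𝔟 are the components of A₀ with respect to 𝔲 = 𝔨 ⊕ 𝔟. -/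
/-!
Comparing coefficients of `A = ξ + η` determines the splitting: for `j > 0` the minus part
vanishes, so `ξⱼ = Aⱼ`; the twisted symmetry `σ(ξⱼ) = ξ₋ⱼ` then gives `ξⱼ = σ(A₋ⱼ)` for
`j < 0`, and `η` is what remains; at `j = 0` the symmetry says `ξ₀ ∈ 𝔨`, so `A₀ = ξ₀ + η₀` is
the decomposition along `𝔲 = 𝔨 ⊕ 𝔟`. Conversely these formulas define a splitting.
-/

section TwistedSplitting

variable {M F : Type*} [AddCommGroup M] [FunLike F M M] {σ : F} {K B : Set M}
  {A ξ η : ℤ →₀ M}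

theorem splitting_apply_pos (hη : ∀ j : ℤ, 0 < j → η j = 0) (hA : A = ξ + η)
    {j : ℤ} (hj : 0 < j) : ξ j = A j := by
  rw [hA, Finsupp.add_apply, hη j hj, add_zero]

theorem splitting_apply_neg (hξ : ∀ j : ℤ, σ (ξ j) = ξ (-j))
    (hη : ∀ j : ℤ, 0 < j → η j = 0) (hA : A = ξ + η) {j : ℤ} (hj : j < 0) :
    ξ j = σ (A (-j)) := by
  rw [← splitting_apply_pos hη hA (neg_pos.mpr hj), hξ, neg_neg]

theorem splitting_apply_zero
    (hcompl : ∀ x : M, ∃! p : M × M, p.1 ∈ K ∧ p.2 ∈ B ∧ x = p.1 + p.2)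
    (hfix : ∀ x : M, σ x = x ↔ x ∈ K) {k0 b0 : M} (hk0 : k0 ∈ K) (hb0 : b0 ∈ B)
    (h0 : A 0 = k0 + b0) (hξ : ∀ j : ℤ, σ (ξ j) = ξ (-j)) (hηB : η 0 ∈ B)
    (hA : A = ξ + η) : ξ 0 = k0 ∧ η 0 = b0 := by
  have hξK : ξ 0 ∈ K := (hfix _).mp (by simpa using hξ 0)
  have hA0 : A 0 = ξ 0 + η 0 := by rw [hA, Finsupp.add_apply]
  exact Prod.ext_iff.mp <|
    (hcompl (A 0)).unique (y₁ := (ξ 0, η 0)) (y₂ := (k0, b0)) ⟨hξK, hηB, hA0⟩ ⟨hk0, hb0, h0⟩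

theorem splitting_formulas
    (hcompl : ∀ x : M, ∃! p : M × M, p.1 ∈ K ∧ p.2 ∈ B ∧ x = p.1 + p.2)
    (hfix : ∀ x : M, σ x = x ↔ x ∈ K) {k0 b0 : M} (hk0 : k0 ∈ K) (hb0 : b0 ∈ B)
    (h0 : A 0 = k0 + b0) (hξ : ∀ j : ℤ, σ (ξ j) = ξ (-j))
    (hη : ∀ j : ℤ, 0 < j → η j = 0) (hηB : η 0 ∈ B) (hA : A = ξ + η) :
    (∀ j : ℤ, 0 < j → ξ j = A j) ∧
      (∀ j : ℤ, j < 0 → ξ j = σ (A (-j))) ∧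
      ξ 0 = k0 ∧
      (∀ j : ℤ, j < 0 → η j = A j - σ (A (-j))) ∧
      η 0 = b0 := by
  obtain ⟨hξ0, hη0⟩ := splitting_apply_zero hcompl hfix hk0 hb0 h0 hξ hηB hA
  refine ⟨fun j hj => splitting_apply_pos hη hA hj, fun j hj => splitting_apply_neg hξ hη hA hj,
    hξ0, fun j hj => ?_, hη0⟩
  rw [← splitting_apply_neg hξ hη hA hj, hA, Finsupp.add_apply, add_sub_cancel_left]

theorem splitting_unique
    (hcompl : ∀ x : M, ∃! p : M × M, p.1 ∈ K ∧ p.2 ∈ B ∧ x = p.1 + p.2)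
    (hfix : ∀ x : M, σ x = x ↔ x ∈ K) {k0 b0 : M} (hk0 : k0 ∈ K) (hb0 : b0 ∈ B)
    (h0 : A 0 = k0 + b0) {ξ' η' : ℤ →₀ M}
    (hξ : ∀ j : ℤ, σ (ξ j) = ξ (-j)) (hη : ∀ j : ℤ, 0 < j → η j = 0) (hηB : η 0 ∈ B)
    (hA : A = ξ + η)
    (hξ' : ∀ j : ℤ, σ (ξ' j) = ξ' (-j)) (hη' : ∀ j : ℤ, 0 < j → η' j = 0) (hηB' : η' 0 ∈ B)
    (hA' : A = ξ' + η') : ξ = ξ' ∧ η = η' := by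
  obtain ⟨pos, neg, zero, negη, zeroη⟩ :=
    splitting_formulas hcompl hfix hk0 hb0 h0 hξ hη hηB hA
  obtain ⟨pos', neg', zero', negη', zeroη'⟩ :=
    splitting_formulas hcompl hfix hk0 hb0 h0 hξ' hη' hηB' hA'
  constructor <;> ext j <;> rcases lt_trichotomy j 0 with hj | rfl | hj
  · rw [neg j hj, neg' j hj]
  · rw [zero, zero']
  · rw [pos j hj, pos' j hj]
  · rw [negη j hj, negη' j hj]
  · rw [zeroη, zeroη']
  · rw [hη j hj, hη' j hj]

variable [ZeroHomClass F M M]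

variable (σ) in
/-- The paper's `π₊(A) = (A₀)_𝔨 + Σ_{j>0}(Aⱼλʲ + σ(Aⱼ)λ⁻ʲ)`, with `k0` in place of `(A₀)_𝔨`. -/
noncomputable def twistedPart (A : ℤ →₀ M) (k0 : M) : ℤ →₀ M :=
  A.filter (0 < ·) +
    Finsupp.equivMapDomain (Equiv.neg ℤ) (Finsupp.mapRange σ (map_zero σ) (A.filter (0 < ·))) +
    Finsupp.single 0 k0

theorem twistedPart_apply (k0 : M) (j : ℤ) :
    twistedPart σ A k0 j =
      (if 0 < j then A j else 0) + (if j < 0 then σ (A (-j)) else 0) +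
        (if j = 0 then k0 else 0) := by
  simp only [twistedPart, Finsupp.add_apply, Finsupp.filter_apply,
    Finsupp.equivMapDomain_apply, Finsupp.mapRange_apply, Finsupp.single_apply,
    Equiv.neg_symm, Equiv.neg_apply, Left.neg_pos_iff, eq_comm (a := (0 : ℤ))]
  split_ifs <;> simp

theorem twistedPart_symm {k0 : M} (hinv : Function.Involutive σ) (hk0 : σ k0 = k0) (j : ℤ) :
    σ (twistedPart σ A k0 j) = twistedPart σ A k0 (-j) := by
  rcases lt_trichotomy j 0 with hj | rfl | hj
  · simp [twistedPart_apply, hj, hj.not_gt, hj.ne, hinv (A (-j))]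
  · simp [twistedPart_apply, hk0]
  · simp [twistedPart_apply, hj, hj.not_gt, hj.ne']

theorem sub_twistedPart_apply_pos (k0 : M) {j : ℤ} (hj : 0 < j) :
    (A - twistedPart σ A k0) j = 0 := by
  simp [twistedPart_apply, hj, hj.not_gt, hj.ne']

theorem sub_twistedPart_apply_zero {k0 b0 : M} (h0 : A 0 = k0 + b0) :
    (A - twistedPart σ A k0) 0 = b0 := by
  simp [twistedPart_apply, h0]

end TwistedSplitting

theorem twisted_U_hierarchy_splitting_general
    {u : Type*} [LieRing u] [LieAlgebra ℝ u]
    (𝔨 𝔟 : LieSubalgebra ℝ u)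
    (hcompl : ∀ x : u, ∃! p : u × u, p.1 ∈ 𝔨 ∧ p.2 ∈ 𝔟 ∧ x = p.1 + p.2)
    (σ : u →ₗ[ℝ] u) (hinv : ∀ x, σ (σ x) = x)
    (hfix : ∀ x : u, σ x = x ↔ x ∈ 𝔨)
    (A : ℤ →₀ u)
    (k0 b0 : u) (hk0 : k0 ∈ 𝔨) (hb0 : b0 ∈ 𝔟) (h0 : A 0 = k0 + b0) :
    -- direct sum decomposition L̃ = L̃₊ ⊕ L̃₋
    (∃! p : (ℤ →₀ u) × (ℤ →₀ u),
      (∀ j : ℤ, σ (p.1 j) = p.1 (-j)) ∧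
      (∀ j : ℤ, 0 < j → p.2 j = 0) ∧ p.2 0 ∈ 𝔟 ∧ A = p.1 + p.2) ∧
    -- explicit formulas for the projections π₊ and π₋
    (∀ ξ η : ℤ →₀ u,
      (∀ j : ℤ, σ (ξ j) = ξ (-j)) →
      (∀ j : ℤ, 0 < j → η j = 0) → η 0 ∈ 𝔟 → A = ξ + η →
      (∀ j : ℤ, 0 < j → ξ j = A j) ∧
      (∀ j : ℤ, j < 0 → ξ j = σ (A (-j))) ∧
      ξ 0 = k0 ∧
      (∀ j : ℤ, j < 0 → η j = A j - σ (A (-j))) ∧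
      η 0 = b0) := by
  set ξ := twistedPart σ A k0
  have hξ : ∀ j, σ (ξ j) = ξ (-j) := twistedPart_symm hinv ((hfix k0).mpr hk0)
  have hη : ∀ j : ℤ, 0 < j → (A - ξ) j = 0 := fun _ => sub_twistedPart_apply_pos k0
  have hηB : (A - ξ) 0 ∈ 𝔟 := (sub_twistedPart_apply_zero (σ := σ) h0).symm ▸ hb0
  have hA : A = ξ + (A - ξ) := (add_sub_cancel ξ A).symm
  refine ⟨⟨(ξ, A - ξ), ⟨hξ, hη, hηB, hA⟩, fun p ⟨hξ', hη', hηB', hA'⟩ => ?_⟩,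
    fun ξ η hξ hη hηB hA => splitting_formulas (K := 𝔨) hcompl hfix hk0 hb0 h0 hξ hη hηB hA⟩
  obtain ⟨h₁, h₂⟩ := splitting_unique (K := 𝔨) hcompl hfix hk0 hb0 h0 hξ' hη' hηB' hA' hξ hη hηB hA
  exact Prod.ext h₁ h₂

/-- Twisted splitting of the loop algebra of 𝔲 = 𝔨 ⊕ 𝔟.
Loops are represented by their finitely supported Laurent coefficients c : ℤ →₀ 𝔲
(with c j = 0 for j > n₀).  L̃₊ is the fixed set of σ̂ (coefficientwise: σ(ξⱼ) = ξ₋ⱼ),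
L̃₋ consists of loops with only nonpositive powers and constant term in 𝔟.
Then every A splits uniquely as A = ξ + η with ξ ∈ L̃₊, η ∈ L̃₋, and the projections
are given by the explicit formulas
π₊(A) = (A₀)_𝔨 + Σ_{j>0}(Aⱼλʲ + σ(Aⱼ)λ⁻ʲ),
π₋(A) = (A₀)_𝔟 + Σ_{j>0}(A₋ⱼ − σ(Aⱼ))λ⁻ʲ. -/
theorem twisted_U_hierarchy_splitting
    {u : Type*} [LieRing u] [LieAlgebra ℝ u]
    (𝔨 𝔟 : LieSubalgebra ℝ u)
    (hcompl : ∀ x : u, ∃! p : u × u, p.1 ∈ 𝔨 ∧ p.2 ∈ 𝔟 ∧ x = p.1 + p.2)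
    (σ : u →ₗ[ℝ] u) (hinv : ∀ x, σ (σ x) = x)
    (hbr : ∀ x y : u, σ ⁅x, y⁆ = ⁅σ x, σ y⁆)
    (hfix : ∀ x : u, σ x = x ↔ x ∈ 𝔨)
    (n₀ : ℤ) (A : ℤ →₀ u) (hA : ∀ j : ℤ, n₀ < j → A j = 0)
    (k0 b0 : u) (hk0 : k0 ∈ 𝔨) (hb0 : b0 ∈ 𝔟) (h0 : A 0 = k0 + b0) :
    -- direct sum decomposition L̃ = L̃₊ ⊕ L̃₋
    (∃! p : (ℤ →₀ u) × (ℤ →₀ u),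
      (∀ j : ℤ, σ (p.1 j) = p.1 (-j)) ∧
      (∀ j : ℤ, 0 < j → p.2 j = 0) ∧ p.2 0 ∈ 𝔟 ∧ A = p.1 + p.2) ∧
    -- explicit formulas for the projections π₊ and π₋
    (∀ ξ η : ℤ →₀ u,
      (∀ j : ℤ, σ (ξ j) = ξ (-j)) →
      (∀ j : ℤ, 0 < j → η j = 0) → η 0 ∈ 𝔟 → A = ξ + η →
      (∀ j : ℤ, 0 < j → ξ j = A j) ∧
      (∀ j : ℤ, j < 0 → ξ j = σ (A (-j))) ∧
      ξ 0 = k0 ∧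
      (∀ j : ℤ, j < 0 → η j = A j - σ (A (-j))) ∧
      η 0 = b0) :=
  twisted_U_hierarchy_splitting_general 𝔨 𝔟 hcompl σ hinv hfix A k0 b0 hk0 hb0 h0
end

section
/- Let σ₁, σ₂ be commuting involutive automorphisms of a Lie algebra 𝔤 (characteristic 0), with eigenspace decompositions 𝔤 = 𝔨ᵢ ⊕ 𝔭ᵢ. Suppose 𝔨₁ ∩ 𝔨₂ = 𝔰₁ ⊕ 𝔰₂ as a direct sum of ideals of 𝔨₁ ∩ 𝔨₂, 𝔨₁' := 𝔰₂ ⊕ (𝔨₁ ∩ 𝔭₂) and 𝔨₂' := 𝔰₁ ⊕ (𝔨₂ ∩ 𝔭₁) are Lie subalgebras, and 𝔨₁ = 𝔰₁ ⊕ 𝔨₁'. Let L̃ = {Σⱼ ξⱼλʲ : ξⱼ ∈ 𝔨₁ for j even, ξⱼ ∈ 𝔭₁ for j odd} (Laurent polynomials), L̃₊ = {ξ ∈ L̃ : ξ₋ⱼ = σ₂(ξⱼ) for all j, and ξ(1) ∈ 𝔨₂'}, and L̃₋ = {Σ_{j≤0} ξⱼλʲ ∈ L̃ : ξ₀ ∈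 𝔨₁'}. Then L̃ = L̃₊ ⊕ L̃₋ as vector spaces. -/
/-!
Write `A₊` for the part of `A` with positive powers. The σ₂-symmetrization
`ξ = A₊ + σ₂(A₊(λ⁻¹)) + ξ₀` lies in `L̃₊` as soon as `ξ₀ ∈ 𝔨₁ ∩ 𝔨₂` is chosen with `ξ(1) ∈ 𝔨₂'`,
and `A - ξ` lies in `L̃₋` as soon as `A₀ - ξ₀ ∈ 𝔨₁'`. Both conditions are met by
`ξ₀ = a₁ - t₂`, where `A₀ = a₁ + a'` along `𝔨₁ = 𝔰₁ ⊕ 𝔨₁'` and `t₂ ∈ 𝔰₂` is the component of the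
σ₂-fixed vector `A₊(1) + σ₂(A₊(1))` along `𝔨₂ = 𝔰₂ ⊕ 𝔨₂'`; the latter splitting follows from
`𝔨₁ ∩ 𝔨₂ = 𝔰₁ ⊕ 𝔰₂` by decomposing into σ₁-eigenvectors.
For uniqueness, an element of `L̃₊ ∩ L̃₋` is constant by the symmetry `ξ₋ⱼ = σ₂ ξⱼ`, and its value
lies in `𝔨₁ ∩ 𝔨₂ ∩ 𝔨₁' ∩ 𝔨₂' = 𝔰₁ ∩ 𝔰₂ = 0`.
-/

section TwistedUK

variable {K : Type*} [Field K] {g : Type*} [LieRing g] [LieAlgebra K g]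

/-- Membership in 𝔨₁' = 𝔰₂ ⊕ 𝔮₁ where 𝔮₁ = 𝔨₁ ∩ 𝔭₂. -/
def MemK1' (σ₁ σ₂ : g →ₗ[K] g) (s₂ : Submodule K g) (x : g) : Prop :=
  ∃ a ∈ s₂, ∃ b : g, σ₁ b = b ∧ σ₂ b = -b ∧ x = a + b

/-- Membership in 𝔨₂' = 𝔰₁ ⊕ 𝔮₂ where 𝔮₂ = 𝔨₂ ∩ 𝔭₁. -/
def MemK2' (σ₁ σ₂ : g →ₗ[K] g) (s₁ : Submodule K g) (x : g) : Prop :=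
  ∃ a ∈ s₁, ∃ b : g, σ₂ b = b ∧ σ₁ b = -b ∧ x = a + b

/-- Membership in L̃: Laurent polynomial loops with even coefficients in 𝔨₁ and
odd coefficients in 𝔭₁. -/
def MemLt (σ₁ : g →ₗ[K] g) (c : ℤ →₀ g) : Prop :=
  ∀ j : ℤ, (Even j → σ₁ (c j) = c j) ∧ (Odd j → σ₁ (c j) = -(c j))

/-- Membership in L̃₊: ξ ∈ L̃ with ξ₋ⱼ = σ₂(ξⱼ) for all j and ξ(1) = Σⱼ ξⱼ ∈ 𝔨₂'. -/
def MemLtPlus (σ₁ σ₂ : g →ₗ[K] g) (s₁ : Submodule K g) (c : ℤ →₀ g) : Prop :=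
  MemLt σ₁ c ∧ (∀ j : ℤ, c (-j) = σ₂ (c j)) ∧ MemK2' σ₁ σ₂ s₁ (c.sum fun _ x => x)

/-- Membership in L̃₋: ξ ∈ L̃ with only nonpositive powers and ξ₀ ∈ 𝔨₁'. -/
def MemLtMinus (σ₁ σ₂ : g →ₗ[K] g) (s₂ : Submodule K g) (c : ℤ →₀ g) : Prop :=
  MemLt σ₁ c ∧ (∀ j : ℤ, 0 < j → c j = 0) ∧ MemK1' σ₁ σ₂ s₂ (c 0)

end TwistedUK

namespace Finsupp

variable {R M : Type*} [Semiring R] [AddCommMonoid M] [Module R M]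

/-- The loop `λ ↦ σ (c (λ⁻¹))`. -/
noncomputable def reflect (σ : M →ₗ[R] M) (c : ℤ →₀ M) : ℤ →₀ M :=
  (c.mapDomain Neg.neg).mapRange σ σ.map_zero

@[simp]
lemma reflect_apply (σ : M →ₗ[R] M) (c : ℤ →₀ M) (j : ℤ) : c.reflect σ j = σ (c (-j)) := by
  rw [reflect, mapRange_apply, ← mapDomain_apply neg_injective c (-j), neg_neg]

lemma sum_reflect (σ : M →ₗ[R] M) (c : ℤ →₀ M) :
    (c.reflect σ).sum (fun _ x => x) = σ (c.sum fun _ x => x) := by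
  rw [reflect, sum_mapRange_index fun _ => rfl, sum_mapDomain_index_inj neg_injective,
    map_finsuppSum]

end Finsupp

section Eigenspaces

variable {K V : Type*} [Field K] [AddCommGroup V] [Module K V]

lemma eq_zero_of_neg_eq_self [NeZero (2 : K)] {b : V} (h : -b = b) : b = 0 := by
  have h2b : (2 : K) • b = 0 := by rw [two_smul]; nth_rw 1 [← h]; exact neg_add_cancel b
  exact (smul_eq_zero.1 h2b).resolve_left two_ne_zero

/-- `kPrime σ₁ σ₂ s₂` is `𝔨₁' = 𝔰₂ ⊕ (𝔨₁ ∩ 𝔭₂)` and `kPrime σ₂ σ₁ s₁` is `𝔨₂' = 𝔰₁ ⊕ (𝔨₂ ∩ 𝔭₁)`. -/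
def kPrime (σ τ : V →ₗ[K] V) (s : Submodule K V) : Submodule K V :=
  s ⊔ (LinearMap.ker (σ - 1) ⊓ LinearMap.ker (τ + 1))

variable {σ τ : V →ₗ[K] V} {s t : Submodule K V}

lemma mem_kPrime {x : V} : x ∈ kPrime σ τ s ↔ ∃ a ∈ s, ∃ b, σ b = b ∧ τ b = -b ∧ x = a + b := by
  simp only [kPrime, Submodule.mem_sup, Submodule.mem_inf, LinearMap.mem_ker,
    LinearMap.sub_apply, LinearMap.add_apply, Module.End.one_apply, sub_eq_zero,
    add_eq_zero_iff_eq_neg, and_assoc, eq_comm (b := x)]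

lemma le_kPrime : s ≤ kPrime σ τ s := le_sup_left

lemma mem_of_mem_kPrime_of_apply_eq [NeZero (2 : K)] (hs : ∀ a ∈ s, τ a = a) {x : V}
    (hx : x ∈ kPrime σ τ s) (hτx : τ x = x) : x ∈ s := by
  obtain ⟨a, ha, b, -, hb, rfl⟩ := mem_kPrime.1 hx
  have hb0 : b = 0 := eq_zero_of_neg_eq_self (K := K) <| by
    simpa [hs a ha, hb] using hτx
  simpa [hb0] using ha

/-- `𝔨₂ ⊆ 𝔰₂ + 𝔨₂'`: split `x` into the `σ`-eigenvectors `(x ± σ x) / 2`. -/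
lemma mem_sup_kPrime_of_apply_eq [NeZero (2 : K)] (hσ : ∀ x, σ (σ x) = x)
    (hcomm : ∀ x, σ (τ x) = τ (σ x)) (hst : ∀ x, σ x = x → τ x = x → x ∈ s ⊔ t) {x : V}
    (hx : τ x = x) : x ∈ t ⊔ kPrime τ σ s := by
  set p := (2⁻¹ : K) • (x + σ x)
  set q := (2⁻¹ : K) • (x - σ x)
  have hpq : p + q = x := by
    rw [← smul_add, add_add_sub_cancel, ← two_smul K, smul_smul, inv_mul_cancel₀ two_ne_zero,
      one_smul]
  have hp : p ∈ s ⊔ t := hst p (by simp [p, hσ, add_comm]) (by simp [p, ← hcomm, hx])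
  have hq : q ∈ kPrime τ σ s :=
    mem_kPrime.2 ⟨0, zero_mem _, q, by simp [q, ← hcomm, hx], by simp [q, hσ, ← smul_neg],
      (zero_add q).symm⟩
  obtain ⟨a, ha, b, hb, hab⟩ := Submodule.mem_sup.1 hp
  rw [← hpq, ← hab, add_comm a b, add_assoc]
  exact Submodule.add_mem_sup hb (add_mem (le_kPrime ha) hq)

end Eigenspaces

section TwistedUK

variable {K : Type*} [Field K] {g : Type*} [LieRing g] [LieAlgebra K g]

section Loops

variable {σ₁ σ₂ : g →ₗ[K] g} {s₁ s₂ : Submodule K g}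

lemma memK1'_iff {x : g} : MemK1' σ₁ σ₂ s₂ x ↔ x ∈ kPrime σ₁ σ₂ s₂ := mem_kPrime.symm

lemma memK2'_iff {x : g} : MemK2' σ₁ σ₂ s₁ x ↔ x ∈ kPrime σ₂ σ₁ s₁ := mem_kPrime.symm

namespace MemLt

variable {c c' : ℤ →₀ g}

lemma add (h : MemLt σ₁ c) (h' : MemLt σ₁ c') : MemLt σ₁ (c + c') := fun j =>
  ⟨fun he => by simp [(h j).1 he, (h' j).1 he],
    fun ho => by simp [(h j).2 ho, (h' j).2 ho, add_comm]⟩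

lemma sub (h : MemLt σ₁ c) (h' : MemLt σ₁ c') : MemLt σ₁ (c - c') := fun j =>
  ⟨fun he => by simp [(h j).1 he, (h' j).1 he],
    fun ho => by simp [(h j).2 ho, (h' j).2 ho]; abel⟩

lemma filter (p : ℤ → Prop) [DecidablePred p] (h : MemLt σ₁ c) : MemLt σ₁ (c.filter p) :=
  fun j => by
    by_cases hp : p j
    · simpa [hp] using h j
    · simp [hp]

lemma reflect (hcomm : ∀ x, σ₁ (σ₂ x) = σ₂ (σ₁ x)) (h : MemLt σ₁ c) :
    MemLt σ₁ (c.reflect σ₂) := fun j =>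
  ⟨fun he => by rw [Finsupp.reflect_apply, hcomm, (h (-j)).1 he.neg],
    fun ho => by rw [Finsupp.reflect_apply, hcomm, (h (-j)).2 ho.neg, map_neg]⟩

end MemLt

lemma memLt_single_zero {x : g} (hx : σ₁ x = x) : MemLt σ₁ (Finsupp.single 0 x) := fun j => by
  rcases eq_or_ne j 0 with rfl | hj
  · simp [hx]
  · simp [hj.symm]

lemma MemLtPlus.sub {c c' : ℤ →₀ g} (h : MemLtPlus σ₁ σ₂ s₁ c) (h' : MemLtPlus σ₁ σ₂ s₁ c') :
    MemLtPlus σ₁ σ₂ s₁ (c - c') := by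
  obtain ⟨hc, hsym, hev⟩ := h
  obtain ⟨hc', hsym', hev'⟩ := h'
  refine ⟨hc.sub hc', fun j => by simp [hsym, hsym'], ?_⟩
  rw [Finsupp.sum_sub_index fun _ _ _ => rfl]
  exact memK2'_iff.2 (sub_mem (memK2'_iff.1 hev) (memK2'_iff.1 hev'))

lemma MemLtMinus.sub {c c' : ℤ →₀ g} (h : MemLtMinus σ₁ σ₂ s₂ c)
    (h' : MemLtMinus σ₁ σ₂ s₂ c') : MemLtMinus σ₁ σ₂ s₂ (c - c') := by
  obtain ⟨hc, hpos, h0⟩ := h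
  obtain ⟨hc', hpos', h0'⟩ := h'
  refine ⟨hc.sub hc', fun j hj => by simp [hpos j hj, hpos' j hj], ?_⟩
  exact memK1'_iff.2 (sub_mem (memK1'_iff.1 h0) (memK1'_iff.1 h0'))

lemma eq_zero_of_memLtPlus_of_memLtMinus [NeZero (2 : K)] (hs₁ : ∀ x ∈ s₁, σ₁ x = x)
    (hs₂ : ∀ x ∈ s₂, σ₂ x = x) (hdisj : Disjoint s₁ s₂) {c : ℤ →₀ g}
    (hp : MemLtPlus σ₁ σ₂ s₁ c) (hm : MemLtMinus σ₁ σ₂ s₂ c) : c = 0 := by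
  obtain ⟨hc, hsym, hev⟩ := hp
  obtain ⟨-, hpos, hc0⟩ := hm
  have hc_single : c = Finsupp.single 0 (c 0) := by
    ext j
    rcases lt_trichotomy j 0 with hj | rfl | hj
    · rw [← neg_neg j, hsym, hpos _ (neg_pos.2 hj), map_zero, Finsupp.single_apply,
        if_neg (by omega)]
    · simp
    · rw [hpos j hj, Finsupp.single_apply, if_neg (by omega)]
  rw [hc_single, Finsupp.sum_single_index rfl] at hev
  have h₁ : c 0 ∈ s₁ :=
    mem_of_mem_kPrime_of_apply_eq hs₁ (memK2'_iff.1 hev) ((hc 0).1 Even.zero)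
  have h₂ : c 0 ∈ s₂ :=
    mem_of_mem_kPrime_of_apply_eq hs₂ (memK1'_iff.1 hc0) (by simpa using (hsym 0).symm)
  rw [hc_single, Submodule.disjoint_def.1 hdisj _ h₁ h₂, Finsupp.single_zero]

lemma eq_and_eq_of_add_eq_add [NeZero (2 : K)] (hs₁ : ∀ x ∈ s₁, σ₁ x = x)
    (hs₂ : ∀ x ∈ s₂, σ₂ x = x) (hdisj : Disjoint s₁ s₂) {ξ ξ' η η' : ℤ →₀ g}
    (hξ : MemLtPlus σ₁ σ₂ s₁ ξ) (hξ' : MemLtPlus σ₁ σ₂ s₁ ξ')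
    (hη : MemLtMinus σ₁ σ₂ s₂ η) (hη' : MemLtMinus σ₁ σ₂ s₂ η') (h : ξ + η = ξ' + η') :
    ξ = ξ' ∧ η = η' := by
  have hd : ξ - ξ' = η' - η := by rw [sub_eq_sub_iff_add_eq_add, h, add_comm]
  have hd0 := eq_zero_of_memLtPlus_of_memLtMinus hs₁ hs₂ hdisj (hξ.sub hξ') (hd ▸ hη'.sub hη)
  exact ⟨sub_eq_zero.1 hd0, (sub_eq_zero.1 (hd ▸ hd0)).symm⟩

lemma memLtPlus_add_reflect_add_single (hinv₂ : ∀ x, σ₂ (σ₂ x) = x)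
    (hcomm : ∀ x, σ₁ (σ₂ x) = σ₂ (σ₁ x)) {c : ℤ →₀ g} (hc : MemLt σ₁ c) {y : g}
    (hy₁ : σ₁ y = y) (hy₂ : σ₂ y = y)
    (hev : (c.sum fun _ x => x) + σ₂ (c.sum fun _ x => x) + y ∈ kPrime σ₂ σ₁ s₁) :
    MemLtPlus σ₁ σ₂ s₁ (c + c.reflect σ₂ + Finsupp.single 0 y) := by
  refine ⟨(hc.add (hc.reflect hcomm)).add (memLt_single_zero hy₁), fun j => ?_, ?_⟩
  · rcases eq_or_ne j 0 with rfl | hj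
    · simp [hinv₂, hy₂, add_comm]
    · simp [hinv₂, hj, add_comm]
  · rw [Finsupp.sum_add_index' (fun _ => rfl) fun _ _ _ => rfl,
      Finsupp.sum_add_index' (fun _ => rfl) fun _ _ _ => rfl, Finsupp.sum_reflect,
      Finsupp.sum_single_index rfl]
    exact memK2'_iff.2 hev

lemma exists_memLtPlus_memLtMinus_add_eq (hinv₂ : ∀ x, σ₂ (σ₂ x) = x)
    (hcomm : ∀ x, σ₁ (σ₂ x) = σ₂ (σ₁ x)) (hs₁ : ∀ x ∈ s₁, σ₁ x = x ∧ σ₂ x = x)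
    (hs₂ : ∀ x ∈ s₂, σ₁ x = x ∧ σ₂ x = x) (hk₁ : ∀ x, σ₁ x = x → x ∈ s₁ ⊔ kPrime σ₁ σ₂ s₂)
    (hk₂ : ∀ x, σ₂ x = x → x ∈ s₂ ⊔ kPrime σ₂ σ₁ s₁) {A : ℤ →₀ g} (hA : MemLt σ₁ A) :
    ∃ ξ η, MemLtPlus σ₁ σ₂ s₁ ξ ∧ MemLtMinus σ₁ σ₂ s₂ η ∧ A = ξ + η := by
  classical
  have hApos : MemLt σ₁ (A.filter (0 < ·)) := hA.filter _
  set Apos := A.filter (0 < ·)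
  set T := (Apos.sum fun _ x => x) + σ₂ (Apos.sum fun _ x => x)
  obtain ⟨a₁, ha₁, a', ha', hA₀⟩ := Submodule.mem_sup.1 (hk₁ (A 0) ((hA 0).1 Even.zero))
  obtain ⟨t₂, ht₂, k, hk, hT⟩ := Submodule.mem_sup.1 (hk₂ T (by simp [T, hinv₂, add_comm]))
  have hev : T + (a₁ - t₂) ∈ kPrime σ₂ σ₁ s₁ := by
    rw [← hT, add_comm t₂, add_add_sub_cancel]
    exact add_mem hk (le_kPrime ha₁)
  have hξ := memLtPlus_add_reflect_add_single hinv₂ hcomm hApos (y := a₁ - t₂)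
    (by simp [(hs₁ a₁ ha₁).1, (hs₂ t₂ ht₂).1]) (by simp [(hs₁ a₁ ha₁).2, (hs₂ t₂ ht₂).2]) hev
  refine ⟨_, A - _, hξ, ⟨hA.sub hξ.1, fun j hj => ?_, ?_⟩, (add_sub_cancel _ A).symm⟩
  · simp [Apos, hj, hj.ne', hj.le]
  · refine memK1'_iff.2 ?_
    convert add_mem ha' (le_kPrime ht₂) using 1
    simp [Apos, ← hA₀]

end Loops

theorem twisted_UK_hierarchy_splitting_general [CharZero K]
    (σ₁ σ₂ : g →ₗ[K] g)
    (hinv1 : ∀ x, σ₁ (σ₁ x) = x) (hinv2 : ∀ x, σ₂ (σ₂ x) = x)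
    (hcomm : ∀ x, σ₁ (σ₂ x) = σ₂ (σ₁ x))
    (s₁ s₂ : Submodule K g)
    (hs1 : ∀ x ∈ s₁, σ₁ x = x ∧ σ₂ x = x)
    (hs2 : ∀ x ∈ s₂, σ₁ x = x ∧ σ₂ x = x)
    -- 𝔨₁ ∩ 𝔨₂ = 𝔰₁ ⊕ 𝔰₂
    (hkk : ∀ x : g, σ₁ x = x → σ₂ x = x →
      ∃! p : g × g, p.1 ∈ s₁ ∧ p.2 ∈ s₂ ∧ x = p.1 + p.2)
    -- 𝔨₁ = 𝔰₁ ⊕ 𝔨₁'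
    (hk1dec : ∀ x : g, σ₁ x = x →
      ∃! p : g × g, p.1 ∈ s₁ ∧ MemK1' σ₁ σ₂ s₂ p.2 ∧ x = p.1 + p.2)
    (A : ℤ →₀ g) (hA : MemLt σ₁ A) :
    ∃! p : (ℤ →₀ g) × (ℤ →₀ g),
      MemLtPlus σ₁ σ₂ s₁ p.1 ∧ MemLtMinus σ₁ σ₂ s₂ p.2 ∧ A = p.1 + p.2 := by
  have hdisj : Disjoint s₁ s₂ := Submodule.disjoint_def.2 fun x hx₁ hx₂ =>
    congrArg Prod.fst <| (hkk x (hs1 x hx₁).1 (hs1 x hx₁).2).unique (y₁ := (x, 0)) (y₂ := (0, x))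
      ⟨hx₁, zero_mem _, (add_zero x).symm⟩ ⟨zero_mem _, hx₂, (zero_add x).symm⟩
  have hk₁ : ∀ x, σ₁ x = x → x ∈ s₁ ⊔ kPrime σ₁ σ₂ s₂ := fun x hx => by
    obtain ⟨p, ⟨hp₁, hp₂, hp⟩, -⟩ := hk1dec x hx
    exact Submodule.mem_sup.2 ⟨p.1, hp₁, p.2, memK1'_iff.1 hp₂, hp.symm⟩
  have hk₂ : ∀ x, σ₂ x = x → x ∈ s₂ ⊔ kPrime σ₂ σ₁ s₁ := fun x =>
    mem_sup_kPrime_of_apply_eq hinv1 hcomm fun y hy₁ hy₂ => by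
      obtain ⟨p, ⟨hp₁, hp₂, hp⟩, -⟩ := hkk y hy₁ hy₂
      exact Submodule.mem_sup.2 ⟨p.1, hp₁, p.2, hp₂, hp.symm⟩
  obtain ⟨ξ, η, hξ, hη, rfl⟩ := exists_memLtPlus_memLtMinus_add_eq hinv2 hcomm hs1 hs2 hk₁ hk₂ hA
  refine ⟨(ξ, η), ⟨hξ, hη, rfl⟩, fun p ⟨hξ', hη', h⟩ => ?_⟩
  obtain ⟨h₁, h₂⟩ := eq_and_eq_of_add_eq_add (fun x hx => (hs1 x hx).1) (fun x hx => (hs2 x hx).2)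
    hdisj hξ' hξ hη' hη h.symm
  exact Prod.ext h₁ h₂

/-- The splitting theorem for the twisted U/K₁-hierarchy:
under the stated hypotheses on the commuting involutions σ₁, σ₂ and the
decompositions 𝔨₁∩𝔨₂ = 𝔰₁ ⊕ 𝔰₂, 𝔨₁ = 𝔰₁ ⊕ 𝔨₁', every A ∈ L̃ splits uniquely
as A = ξ + η with ξ ∈ L̃₊ and η ∈ L̃₋. -/
theorem twisted_UK_hierarchy_splitting [CharZero K]
    (σ₁ σ₂ : g →ₗ[K] g)
    (hinv1 : ∀ x, σ₁ (σ₁ x) = x) (hinv2 : ∀ x, σ₂ (σ₂ x) = x)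
    (hbr1 : ∀ x y : g, σ₁ ⁅x, y⁆ = ⁅σ₁ x, σ₁ y⁆)
    (hbr2 : ∀ x y : g, σ₂ ⁅x, y⁆ = ⁅σ₂ x, σ₂ y⁆)
    (hcomm : ∀ x, σ₁ (σ₂ x) = σ₂ (σ₁ x))
    (s₁ s₂ : Submodule K g)
    (hs1 : ∀ x ∈ s₁, σ₁ x = x ∧ σ₂ x = x)
    (hs2 : ∀ x ∈ s₂, σ₁ x = x ∧ σ₂ x = x)
    -- 𝔨₁ ∩ 𝔨₂ = 𝔰₁ ⊕ 𝔰₂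
    (hkk : ∀ x : g, σ₁ x = x → σ₂ x = x →
      ∃! p : g × g, p.1 ∈ s₁ ∧ p.2 ∈ s₂ ∧ x = p.1 + p.2)
    -- 𝔰₁, 𝔰₂ are ideals of 𝔨₁ ∩ 𝔨₂
    (hid1 : ∀ x y : g, σ₁ x = x → σ₂ x = x → y ∈ s₁ → ⁅x, y⁆ ∈ s₁)
    (hid2 : ∀ x y : g, σ₁ x = x → σ₂ x = x → y ∈ s₂ → ⁅x, y⁆ ∈ s₂)
    -- 𝔨₁' and 𝔨₂' are Lie subalgebras
    (hk1' : ∀ x y : g, MemK1' σ₁ σ₂ s₂ x → MemK1' σ₁ σ₂ s₂ y → MemK1' σ₁ σ₂ s₂ ⁅x, y⁆)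
    (hk2' : ∀ x y : g, MemK2' σ₁ σ₂ s₁ x → MemK2' σ₁ σ₂ s₁ y → MemK2' σ₁ σ₂ s₁ ⁅x, y⁆)
    -- 𝔨₁ = 𝔰₁ ⊕ 𝔨₁'
    (hk1dec : ∀ x : g, σ₁ x = x →
      ∃! p : g × g, p.1 ∈ s₁ ∧ MemK1' σ₁ σ₂ s₂ p.2 ∧ x = p.1 + p.2)
    (A : ℤ →₀ g) (hA : MemLt σ₁ A) :
    ∃! p : (ℤ →₀ g) × (ℤ →₀ g),
      MemLtPlus σ₁ σ₂ s₁ p.1 ∧ MemLtMinus σ₁ σ₂ s₂ p.2 ∧ A = p.1 + p.2 :=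
  twisted_UK_hierarchy_splitting_general σ₁ σ₂ hinv1 hinv2 hcomm s₁ s₂ hs1 hs2 hkk hk1dec A hA

end TwistedUK
end

section
/- In the setting of the twisted U/K₁ splitting, the components of the projections are given explicitly: for A = Σᵢ Aᵢλⁱ ∈ L̃ decomposed as A = ξ + η with ξ ∈ L̃₊, η ∈ L̃₋, one has ξⱼ = Aⱼ for j > 0, ξⱼ = σ₂(A₋ⱼ) for j < 0, ηⱼ = Aⱼ − σ₂(A₋ⱼ) for j < 0, π_{𝔰₁}(ξ₀) = π_{𝔰₁}(A₀), π_{𝔰₂}(ξ₀) = −π_{𝔰₂}(Σ_{j>0, j even}(Aⱼ + σ₂(Aⱼ))), π_{𝔰₂}(η₀) = π_{𝔰₂}(A₀ + Σ_{j>0, j even}(Aⱼ + σ₂(Aⱼ))), and π_{𝔮₁}(η₀) = π_{𝔮₁}(A₀), where 𝔮₁ = 𝔨₁ ∩ 𝔭₂. -/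
section TwistedUK

variable {K : Type*} [Field K] {g : Type*} [LieRing g] [LieAlgebra K g]

lemma aux_two_cancel (K : Type*) {g : Type*} [Field K] [CharZero K] [AddCommGroup g]
    [Module K g] (x y : g) (h : x + x = y + y) : x = y := by
  have h2 : (2:K) • x = (2:K) • y := by rw [two_smul, two_smul]; exact h
  exact smul_right_injective g two_ne_zero h2

lemma aux_sum_neg_reindex {M : Type*} [AddCommMonoid M] (T : Finset ℤ)
    (hT : ∀ j ∈ T, -j ∈ T) (G : ℤ → M) : ∑ j ∈ T, G j = ∑ j ∈ T, G (-j) := by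
  apply Finset.sum_nbij' (fun j => -j) (fun j => -j) <;> intros <;> simp_all

lemma aux_inter (σ₁ σ₂ : g →ₗ[K] g) (s₁ s₂ : Submodule K g)
    (hs1 : ∀ x ∈ s₁, σ₁ x = x ∧ σ₂ x = x)
    (hkk : ∀ x : g, σ₁ x = x → σ₂ x = x →
      ∃! p : g × g, p.1 ∈ s₁ ∧ p.2 ∈ s₂ ∧ x = p.1 + p.2)
    (x : g) (hx1 : x ∈ s₁) (hx2 : x ∈ s₂) : x = 0 := by
  obtain ⟨hf1, hf2⟩ := hs1 x hx1
  obtain ⟨p, _, hu⟩ := hkk x hf1 hf2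
  have e1 : ((x, (0:g)) : g × g) = p := hu (x, 0) ⟨hx1, zero_mem _, (add_zero x).symm⟩
  have e2 : (((0:g), x) : g × g) = p := hu (0, x) ⟨zero_mem _, hx2, (zero_add x).symm⟩
  have := e1.trans e2.symm
  exact congrArg Prod.fst this

lemma aux_unique [CharZero K] (σ₁ σ₂ : g →ₗ[K] g) (s₁ s₂ : Submodule K g)
    (hs1 : ∀ x ∈ s₁, σ₁ x = x ∧ σ₂ x = x)
    (hs2 : ∀ x ∈ s₂, σ₁ x = x ∧ σ₂ x = x)
    (hkk : ∀ x : g, σ₁ x = x → σ₂ x = x →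
      ∃! p : g × g, p.1 ∈ s₁ ∧ p.2 ∈ s₂ ∧ x = p.1 + p.2)
    (u1 u2 u3 v1 v2 v3 : g) (hu1 : u1 ∈ s₁) (hu2 : u2 ∈ s₂) (hu3 : σ₂ u3 = -u3)
    (hv1 : v1 ∈ s₁) (hv2 : v2 ∈ s₂) (hv3 : σ₂ v3 = -v3)
    (h : u1 + u2 + u3 = v1 + v2 + v3) : u1 = v1 ∧ u2 = v2 ∧ u3 = v3 := by
  have hσ : u1 + u2 - u3 = v1 + v2 - v3 := by
    have := congrArg σ₂ h
    simpa [map_add, (hs1 u1 hu1).2, (hs2 u2 hu2).2, hu3, (hs1 v1 hv1).2,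
      (hs2 v2 hv2).2, hv3, sub_eq_add_neg] using this
  have h3 : u3 = v3 := by
    apply aux_two_cancel K
    have := congrArg₂ (· - ·) h hσ
    simpa using by linear_combination (norm := abel) h - hσ
  have h12 : u1 + u2 = v1 + v2 := by
    have := h; rw [h3] at this; exact add_right_cancel this
  have hd : u1 - v1 = 0 := by
    apply aux_inter σ₁ σ₂ s₁ s₂ hs1 hkk _ (sub_mem hu1 hv1)
    have : u1 - v1 = v2 - u2 := by linear_combination (norm := abel) h12
    rw [this]; exact sub_mem hv2 hu2
  exact ⟨sub_eq_zero.mp hd, by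
    have : u2 - v2 = 0 := by linear_combination (norm := abel) h12 - hd
    exact sub_eq_zero.mp this, h3⟩

/-- Explicit formulas for the projections in the twisted U/K₁ splitting:
if A = ξ + η with ξ ∈ L̃₊ and η ∈ L̃₋, then ξⱼ = Aⱼ for j > 0, ξⱼ = σ₂(A₋ⱼ) for j < 0,
ηⱼ = Aⱼ − σ₂(A₋ⱼ) for j < 0, and with E = Σ_{j>0 even}(Aⱼ + σ₂(Aⱼ)), the components
of ξ₀ and η₀ in 𝔨₁ = 𝔰₁ ⊕ 𝔰₂ ⊕ 𝔮₁ are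
π_{𝔰₁}(ξ₀) = π_{𝔰₁}(A₀), π_{𝔰₂}(ξ₀) = −π_{𝔰₂}(E),
π_{𝔰₂}(η₀) = π_{𝔰₂}(A₀ + E), π_{𝔮₁}(η₀) = π_{𝔮₁}(A₀). -/
theorem twisted_UK_projection_formulas [CharZero K]
    (σ₁ σ₂ : g →ₗ[K] g)
    (hinv1 : ∀ x, σ₁ (σ₁ x) = x) (hinv2 : ∀ x, σ₂ (σ₂ x) = x)
    (hbr1 : ∀ x y : g, σ₁ ⁅x, y⁆ = ⁅σ₁ x, σ₁ y⁆)
    (hbr2 : ∀ x y : g, σ₂ ⁅x, y⁆ = ⁅σ₂ x, σ₂ y⁆)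
    (hcomm : ∀ x, σ₁ (σ₂ x) = σ₂ (σ₁ x))
    (s₁ s₂ : Submodule K g)
    (hs1 : ∀ x ∈ s₁, σ₁ x = x ∧ σ₂ x = x)
    (hs2 : ∀ x ∈ s₂, σ₁ x = x ∧ σ₂ x = x)
    (hkk : ∀ x : g, σ₁ x = x → σ₂ x = x →
      ∃! p : g × g, p.1 ∈ s₁ ∧ p.2 ∈ s₂ ∧ x = p.1 + p.2)
    (hk1dec : ∀ x : g, σ₁ x = x →
      ∃! p : g × g, p.1 ∈ s₁ ∧ MemK1' σ₁ σ₂ s₂ p.2 ∧ x = p.1 + p.2)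
    (A ξ η : ℤ →₀ g) (hA : MemLt σ₁ A)
    (hξ : MemLtPlus σ₁ σ₂ s₁ ξ) (hη : MemLtMinus σ₁ σ₂ s₂ η)
    (hsum : A = ξ + η)
    -- decomposition A₀ = a₀ˢ¹ + a₀ˢ² + a₀ᑫ¹ in 𝔨₁ = 𝔰₁ ⊕ 𝔰₂ ⊕ 𝔮₁
    (as1 as2 aq1 : g) (has1 : as1 ∈ s₁) (has2 : as2 ∈ s₂)
    (haq1 : σ₁ aq1 = aq1 ∧ σ₂ aq1 = -aq1) (hA0 : A 0 = as1 + as2 + aq1)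
    -- decomposition of E = Σ_{j>0, j even} (Aⱼ + σ₂(Aⱼ)) in 𝔰₁ ⊕ 𝔰₂
    (es1 es2 : g) (hes1 : es1 ∈ s₁) (hes2 : es2 ∈ s₂)
    (hE : (A.sum fun j x => if 0 < j ∧ Even j then x + σ₂ x else 0) = es1 + es2)
    -- decomposition ξ₀ = xs1 + xs2 + xq1
    (xs1 xs2 xq1 : g) (hxs1 : xs1 ∈ s₁) (hxs2 : xs2 ∈ s₂)
    (hxq1 : σ₁ xq1 = xq1 ∧ σ₂ xq1 = -xq1) (hξ0 : ξ 0 = xs1 + xs2 + xq1)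
    -- decomposition η₀ = ys1 + ys2 + yq1
    (ys1 ys2 yq1 : g) (hys1 : ys1 ∈ s₁) (hys2 : ys2 ∈ s₂)
    (hyq1 : σ₁ yq1 = yq1 ∧ σ₂ yq1 = -yq1) (hη0 : η 0 = ys1 + ys2 + yq1) :
    (∀ j : ℤ, 0 < j → ξ j = A j) ∧
    (∀ j : ℤ, j < 0 → ξ j = σ₂ (A (-j))) ∧
    (∀ j : ℤ, j < 0 → η j = A j - σ₂ (A (-j))) ∧
    xs1 = as1 ∧
    xs2 = -es2 ∧
    ys2 = as2 + es2 ∧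
    yq1 = aq1 := by
    -- coefficient formulas
  have hpos : ∀ j : ℤ, 0 < j → ξ j = A j := by
    intro j hj
    have h := congrArg (fun c : ℤ →₀ g => c j) hsum
    simp only [Finsupp.add_apply] at h
    rw [hη.2.1 j hj, add_zero] at h
    exact h.symm
  have hneg : ∀ j : ℤ, j < 0 → ξ j = σ₂ (A (-j)) := by
    intro j hj
    have h := hξ.2.1 (-j)
    rw [neg_neg, hpos (-j) (by omega)] at h
    exact h
  have hηneg : ∀ j : ℤ, j < 0 → η j = A j - σ₂ (A (-j)) := by
    intro j hj
    have h := congrArg (fun c : ℤ →₀ g => c j) hsum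
    simp only [Finsupp.add_apply] at h
    rw [hneg j hj] at h
    rw [h]; abel
  -- σ₂ fixes ξ 0, hence xq1 = 0
  have hfix : σ₂ (ξ 0) = ξ 0 := by
    have h := hξ.2.1 0
    rw [neg_zero] at h
    exact h.symm
  have hxq1z : xq1 = 0 := by
    apply aux_two_cancel K
    have h : xs1 + xs2 - xq1 = xs1 + xs2 + xq1 := by
      have := hfix
      rw [hξ0] at this
      simpa [map_add, (hs1 xs1 hxs1).2, (hs2 xs2 hxs2).2, hxq1.2, sub_eq_add_neg]
        using this
    have := congrArg₂ (· - ·) h (rfl : xs1 + xs2 + xq1 = xs1 + xs2 + xq1)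
    linear_combination (norm := abel) -h
  -- the symmetric finset
  set V : Finset ℤ := ξ.support ∪ A.support with hV
  set T : Finset ℤ := V ∪ V.image (fun j => -j) with hT
  have hTsym : ∀ j ∈ T, -j ∈ T := by
    intro j hj
    simp only [hT, Finset.mem_union, Finset.mem_image] at hj ⊢
    rcases hj with h | ⟨k, hk, hkj⟩
    · exact Or.inr ⟨j, h, rfl⟩
    · exact Or.inl (by rw [← hkj, neg_neg]; exact hk)
  have hsubξ : ξ.support ⊆ T := fun x hx =>
    Finset.mem_union_left _ (Finset.mem_union_left _ hx)
  have hsubA : A.support ⊆ T := fun x hx =>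
    Finset.mem_union_left _ (Finset.mem_union_right _ hx)
  set S : g := ξ.sum (fun _ x => x) with hSdef
  set E : g := A.sum (fun j x => if 0 < j ∧ Even j then x + σ₂ x else 0) with hEdef
  have hSsum : S = ∑ j ∈ T, ξ j :=
    Finsupp.sum_of_support_subset ξ hsubξ _ (fun i _ => rfl)
  have hEsum : E = ∑ j ∈ T, (if 0 < j ∧ Even j then A j + σ₂ (A j) else 0) :=
    Finsupp.sum_of_support_subset A hsubA _ (fun i _ => by simp)
  set F : ℤ → g := fun j => if Even j then (2:K) • ξ j else 0 with hF
  have step1 : S + σ₁ S = ∑ j ∈ T, F j := by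
    rw [hSsum, map_sum, ← Finset.sum_add_distrib]
    refine Finset.sum_congr rfl fun j _ => ?_
    rcases Int.even_or_odd j with he | ho
    · simp only [hF, if_pos he, (hξ.1 j).1 he, two_smul]
    · have hne : ¬ Even j := fun he => Int.not_odd_iff_even.mpr he ho
      simp [hF, hne, (hξ.1 j).2 ho]
  have hsplit : ∑ j ∈ T, F j =
      (∑ j ∈ T, (if j = 0 then F j else 0)) +
      ((∑ j ∈ T, (if 0 < j then F j else 0)) +
       (∑ j ∈ T, (if j < 0 then F j else 0))) := by
    rw [← Finset.sum_add_distrib, ← Finset.sum_add_distrib]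
    refine Finset.sum_congr rfl fun j _ => ?_
    rcases lt_trichotomy j 0 with h | h | h
    · simp [h, h.ne, asymm h]
    · simp [h]
    · simp [h, h.ne', asymm h]
  have h1 : ∑ j ∈ T, (if j = 0 then F j else 0) = (2:K) • ξ 0 := by
    rw [Finset.sum_ite_eq' T 0 F]
    by_cases h0 : (0:ℤ) ∈ T
    · simp [h0, hF]
    · have hz : ξ 0 = 0 := by
        by_contra hc; exact h0 (hsubξ (Finsupp.mem_support_iff.mpr hc))
      simp [h0, hz]
  have h2 : ∑ j ∈ T, (if 0 < j then F j else 0) =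
      ∑ j ∈ T, (if 0 < j ∧ Even j then (2:K) • ξ j else 0) := by
    refine Finset.sum_congr rfl fun j _ => ?_
    simp only [hF]
    split_ifs <;> tauto
  have h3 : ∑ j ∈ T, (if j < 0 then F j else 0) =
      ∑ j ∈ T, (if 0 < j ∧ Even j then (2:K) • σ₂ (ξ j) else 0) := by
    rw [aux_sum_neg_reindex T hTsym (fun j => if j < 0 then F j else 0)]
    refine Finset.sum_congr rfl fun j _ => ?_
    simp only [hF, neg_lt_zero, even_neg, hξ.2.1 j]
    split_ifs <;> tauto
  have h23 : (∑ j ∈ T, (if 0 < j then F j else 0)) +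
      (∑ j ∈ T, (if j < 0 then F j else 0)) = (2:K) • E := by
    rw [h2, h3, ← Finset.sum_add_distrib, hEsum, Finset.smul_sum]
    refine Finset.sum_congr rfl fun j _ => ?_
    split_ifs with h
    · rw [hpos j h.1, smul_add]
    · simp
  obtain ⟨a, ha, b, hb2, hb1, hSab⟩ := hξ.2.2
  have keyL : (2:K) • a = (2:K) • ξ 0 + (2:K) • E := by
    have hleft : S + σ₁ S = (2:K) • a := by
      rw [hSdef, hSab, map_add, (hs1 a ha).1, hb1, two_smul]
      abel
    rw [← hleft, step1, hsplit, h1, h23]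
  have ha_eq : a = ξ 0 + E := by
    apply smul_right_injective g (two_ne_zero : (2:K) ≠ 0)
    show (2:K) • a = (2:K) • (ξ 0 + E)
    rw [keyL, smul_add]
  -- xs2 = -es2
  have hxs2e : xs2 + es2 = 0 := by
    have hrw : xs2 + es2 = a - xs1 - es1 := by
      rw [ha_eq, hξ0, hE, hxq1z]; abel
    apply aux_inter σ₁ σ₂ s₁ s₂ hs1 hkk
    · rw [hrw]; exact sub_mem (sub_mem ha hxs1) hes1
    · exact add_mem hxs2 hes2
  have hxs2v : xs2 = -es2 := eq_neg_of_add_eq_zero_left hxs2e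
  -- η 0 analysis : ys1 = 0
  obtain ⟨a', ha', b', hb'1, hb'2, hη0'⟩ := hη.2.2
  have hy : ys1 = 0 ∧ ys2 = a' ∧ yq1 = b' := by
    apply aux_unique σ₁ σ₂ s₁ s₂ hs1 hs2 hkk _ _ _ _ _ _ hys1 hys2 hyq1.2
      (zero_mem _) ha' hb'2
    rw [← hη0, hη0', zero_add]
  -- A 0 = ξ 0 + η 0
  have hA0' : as1 + as2 + aq1 = xs1 + (xs2 + ys2) + yq1 := by
    have h := congrArg (fun c : ℤ →₀ g => c (0:ℤ)) hsum
    simp only [Finsupp.add_apply] at h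
    rw [hA0, hξ0, hη0, hxq1z, hy.1] at h
    rw [h]; abel
  have hfin := aux_unique σ₁ σ₂ s₁ s₂ hs1 hs2 hkk _ _ _ _ _ _ has1 has2 haq1.2
    hxs1 (add_mem hxs2 hys2) hyq1.2 hA0'
  refine ⟨hpos, hneg, hηneg, hfin.1.symm, hxs2v, ?_, hfin.2.2.symm⟩
  have := hfin.2.1
  rw [hxs2v] at this
  rw [this]; abel

end TwistedUK
end

section
/- Let 𝔲 be a Lie algebra with an ad-invariant nondegenerate bilinear form, 𝒜 ⊆ 𝔲 abelian with basis a₁,…,aₙ, and 𝒜^⊥ = {x ∈ 𝔲 : (x, 𝒜) = 0}. For v : ℝⁿ → 𝒜^⊥ smooth, the 1-form θ_λ = Σᵢ (aᵢλ + [aᵢ, v]) dxᵢ is flat for all λ ∈ ℂ if and only if v satisfies the U-system: [aᵢ, v_{xⱼ}] − [aⱼ, v_{xᵢ}] = [[aᵢ, v], [aⱼ, v]] for all 1 ≤ i ≠ j ≤ n. -/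
attribute [local instance] Matrix.normedAddCommGroup Matrix.normedSpace

private lemma fderiv_bracket_aux {N n : ℕ}
    (v : (Fin n → ℝ) → Matrix (Fin N) (Fin N) ℂ)
    (hv : ContDiff ℝ (⊤ : ℕ∞) v) (c : Matrix (Fin N) (Fin N) ℂ) (lam : ℂ)
    (x : Fin n → ℝ) (w : Fin n → ℝ) :
    fderiv ℝ (fun y => lam • c + ⁅c, v y⁆) x w = ⁅c, fderiv ℝ v x w⁆ := by
  letI : LieRing (Matrix (Fin N) (Fin N) ℂ) := LieRing.ofAssociativeRing
  set L : Matrix (Fin N) (Fin N) ℂ →L[ℝ] Matrix (Fin N) (Fin N) ℂ :=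
    ((LieAlgebra.ad ℂ (Matrix (Fin N) (Fin N) ℂ) c).restrictScalars
      ℝ).toContinuousLinearMap with hL
  have hdv : HasFDerivAt v (fderiv ℝ v x) x :=
    (hv.differentiable (by simp) x).hasFDerivAt
  have h1 : HasFDerivAt (fun y => lam • c + ⁅c, v y⁆)
      (L.comp (fderiv ℝ v x)) x := by
    have := (L.hasFDerivAt.comp x hdv).const_add (lam • c)
    exact this
  rw [h1.fderiv]
  simp [hL, LieAlgebra.ad_apply]

/-- For a matrix Lie algebra 𝔲 with an ad-invariant nondegenerate bilinear
form, an abelian family a₁,…,aₙ (a basis of 𝒜) with v taking values in 𝒜^⊥, the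
connection 1-form θ_λ = Σᵢ (aᵢλ + [aᵢ,v]) dxᵢ is flat for every λ ∈ ℂ if and only if v
satisfies the U-system  [aᵢ, v_{xⱼ}] − [aⱼ, v_{xᵢ}] = [[aᵢ,v],[aⱼ,v]]  for i ≠ j. -/
theorem U_system_iff_flat {N n : ℕ}
    (Bf : LinearMap.BilinForm ℂ (Matrix (Fin N) (Fin N) ℂ))
    (hnd : ∀ x : Matrix (Fin N) (Fin N) ℂ, (∀ y, Bf x y = 0) → x = 0)
    (had : ∀ x y z : Matrix (Fin N) (Fin N) ℂ, Bf ⁅x, y⁆ z + Bf y ⁅x, z⁆ = 0)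
    (a : Fin n → Matrix (Fin N) (Fin N) ℂ)
    (hab : ∀ i j, ⁅a i, a j⁆ = 0)
    (hli : LinearIndependent ℂ a)
    (v : (Fin n → ℝ) → Matrix (Fin N) (Fin N) ℂ)
    (hv : ContDiff ℝ (⊤ : ℕ∞) v)
    (horth : ∀ x i, Bf (v x) (a i) = 0) :
    -- θ_λ is flat for all λ ∈ ℂ
    (∀ lam : ℂ, ∀ x : Fin n → ℝ, ∀ i j : Fin n,
        fderiv ℝ (fun y => lam • a j + ⁅a j, v y⁆) x (Pi.single i 1)
          - fderiv ℝ (fun y => lam • a i + ⁅a i, v y⁆) x (Pi.single j 1)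
          + ⁅lam • a i + ⁅a i, v x⁆, lam • a j + ⁅a j, v x⁆⁆ = 0)
    ↔
    -- v satisfies the U-system
    (∀ x : Fin n → ℝ, ∀ i j : Fin n, i ≠ j →
        ⁅a i, fderiv ℝ v x (Pi.single j 1)⁆ - ⁅a j, fderiv ℝ v x (Pi.single i 1)⁆
          = ⁅⁅a i, v x⁆, ⁅a j, v x⁆⁆) := by
  letI : LieRing (Matrix (Fin N) (Fin N) ℂ) := LieRing.ofAssociativeRing
  constructor
  · intro hflat x i j _
    have h := hflat 0 x i j
    rw [fderiv_bracket_aux v hv, fderiv_bracket_aux v hv] at h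
    simp only [zero_smul, zero_add] at h
    linear_combination (norm := module) -h
  · intro hU lam x i j
    rw [fderiv_bracket_aux v hv, fderiv_bracket_aux v hv]
    rcases eq_or_ne i j with rfl | hij
    · simp
    · have h := hU x i j hij
      have hjac : ⁅a i, ⁅a j, v x⁆⁆ - ⁅a j, ⁅a i, v x⁆⁆ = 0 := by
        have := lie_lie (a i) (a j) (v x)
        rw [hab i j] at this
        simpa using this.symm
      simp only [add_lie, lie_add, smul_lie, lie_smul, hab i j, smul_zero]
      rw [← lie_skew ⁅a i, v x⁆ (a j)]
      linear_combination (norm := module) -h + lam • hjac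
end
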